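/- arXiv:2412.16588 — 3 statements merged into one kernel-verified Lean document; each statement's English description precedes it below -/
import Mathlib

section
/- For the same planar polynomial system with λ₁ = −1, λ₂ = 3, the function φ₂(x) = −x₁² + x₂ + 2x₁x₂² − x₂⁴ satisfies ∇φ₂(x)·f(x) = 3φ₂(x) for all x ∈ ℝ². -/
open ContinuousLinearMap

theorem hasFDerivAt_principal_eigenfunction_two (x : ℝ × ℝ) :
    HasFDerivAt (fun p : ℝ × ℝ => -p.1 ^ 2 + p.2 + 2 * p.1 * p.2 ^ 2 - p.2 ^ 4)
      ((-2 * x.1 + 2 * x.2 ^ 2) • fst ℝ ℝ ℝ + (1 + 4 * x.1 * x.2 - 4 * x.2 ^ 3) • snd ℝ ℝ ℝ)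
      x := by
  have h₁ : HasFDerivAt (fun p : ℝ × ℝ => p.1) (fst ℝ ℝ ℝ) x := hasFDerivAt_fst
  have h₂ : HasFDerivAt (fun p : ℝ × ℝ => p.2) (snd ℝ ℝ ℝ) x := hasFDerivAt_snd
  refine ((((h₁.pow 2).neg.add h₂).add ((h₁.const_mul 2).mul (h₂.pow 2))).sub
    (h₂.pow 4)).congr_fderiv ?_
  ext <;> simp <;> ring

/-- For the same planar polynomial system with λ₁ = −1, λ₂ = 3, the function
φ₂(x) = −x₁² + x₂ + 2x₁x₂² − x₂⁴ satisfies ∇φ₂(x)·f(x) = 3φ₂(x) for all x ∈ ℝ². -/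
theorem first_example_principal_eigenfunction_two
    (f : ℝ × ℝ → ℝ × ℝ)
    (hf : ∀ x : ℝ × ℝ, f x =
      (-2 * 3 * x.2 * (x.1 ^ 2 - x.2 - 2 * x.1 * x.2 ^ 2 + x.2 ^ 4) +
        (-1 : ℝ) * (x.1 + 4 * x.1 ^ 2 * x.2 - x.2 ^ 2 - 8 * x.1 * x.2 ^ 3 + 4 * x.2 ^ 5),
       2 * (-1 : ℝ) * (x.1 - x.2 ^ 2) ^ 2 -
        3 * (x.1 ^ 2 - x.2 - 2 * x.1 * x.2 ^ 2 + x.2 ^ 4)))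
    (φ : ℝ × ℝ → ℝ)
    (hφ : ∀ x : ℝ × ℝ, φ x = -x.1 ^ 2 + x.2 + 2 * x.1 * x.2 ^ 2 - x.2 ^ 4) :
    ∀ x : ℝ × ℝ, fderiv ℝ φ x (f x) = 3 * φ x := by
  intro x
  rw [funext hφ, (hasFDerivAt_principal_eigenfunction_two x).fderiv, hf]
  simp only [add_apply, smul_apply, coe_fst', coe_snd', smul_eq_mul]
  ring
end

section
/- For the system ẋ₁ = ((7.5x₂² + 5)(x₁³ + x₁ + sin x₂) + (−x₁ + x₂³ + 2x₂)cos x₂)/D(x), ẋ₂ = (2.5x₁³ + 2.5x₁ − (3x₁² + 1)(−x₁ + x₂³ + 2x₂) + 2.5 sin x₂)/D(x), with D(x) = 9x₁²x₂² + 6x₁² + 3x₂² + cos x₂ + 2, the function φ₁(x) = x₁ − 2x₂ − x₂³ satisfies ∇φ₁(x)·f(x) = −φ₁(x) for all x ∈ ℝ². -/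
/-!
Since `φ x = x.1 - g x.2` with `g t = 2t + t³`, we get `∇φ(x)·v = v.1 - (2 + 3x₂²) v.2`. The
numerator of `∇φ·f` then factors as `-φ · D`, as a polynomial identity in `x₁, x₂` and the
independent symbols `sin x₂, cos x₂`, and `D > 0` because `cos ≥ -1`.
-/

theorem fderiv_fst_sub_comp_snd_apply {g : ℝ → ℝ} {g' : ℝ} {x : ℝ × ℝ}
    (hg : HasDerivAt g g' x.2) (v : ℝ × ℝ) :
    fderiv ℝ (fun p : ℝ × ℝ => p.1 - g p.2) x v = v.1 - g' * v.2 := by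
  have hsnd : HasFDerivAt (fun p : ℝ × ℝ => p.2) (ContinuousLinearMap.snd ℝ ℝ ℝ) x :=
    hasFDerivAt_snd
  have h : HasFDerivAt (fun p : ℝ × ℝ => p.1 - g p.2) _ x :=
    hasFDerivAt_fst.sub (hg.comp_hasFDerivAt x hsnd)
  rw [h.fderiv]
  simp

theorem hasDerivAt_two_mul_add_pow_three (y : ℝ) :
    HasDerivAt (fun t : ℝ => 2 * t + t ^ 3) (2 + 3 * y ^ 2) y := by
  simpa using ((hasDerivAt_id' y).const_mul 2).fun_add ((hasDerivAt_id' y).fun_pow 3)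

theorem denominator_pos (a b : ℝ) :
    0 < 9 * a ^ 2 * b ^ 2 + 6 * a ^ 2 + 3 * b ^ 2 + Real.cos b + 2 := by
  nlinarith [Real.neg_one_le_cos b, sq_nonneg a, sq_nonneg b, sq_nonneg (a * b)]

theorem numerator_eq_neg_mul_denominator (a b s c : ℝ) :
    ((7.5 * b ^ 2 + 5) * (a ^ 3 + a + s) + (-a + b ^ 3 + 2 * b) * c)
      - (2 + 3 * b ^ 2) *
        (2.5 * a ^ 3 + 2.5 * a - (3 * a ^ 2 + 1) * (-a + b ^ 3 + 2 * b) + 2.5 * s)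
      = -(a - 2 * b - b ^ 3) * (9 * a ^ 2 * b ^ 2 + 6 * a ^ 2 + 3 * b ^ 2 + c + 2) := by
  ring

/-- For the second analytical example, φ₁(x) = x₁ − 2x₂ − x₂³ satisfies
∇φ₁(x)·f(x) = −φ₁(x) for all x ∈ ℝ². -/
theorem second_example_principal_eigenfunction_one
    (D : ℝ × ℝ → ℝ)
    (hD : ∀ x : ℝ × ℝ, D x =
      9 * x.1 ^ 2 * x.2 ^ 2 + 6 * x.1 ^ 2 + 3 * x.2 ^ 2 + Real.cos x.2 + 2)
    (f : ℝ × ℝ → ℝ × ℝ)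
    (hf : ∀ x : ℝ × ℝ, f x =
      (((7.5 * x.2 ^ 2 + 5) * (x.1 ^ 3 + x.1 + Real.sin x.2) +
          (-x.1 + x.2 ^ 3 + 2 * x.2) * Real.cos x.2) / D x,
       (2.5 * x.1 ^ 3 + 2.5 * x.1 -
          (3 * x.1 ^ 2 + 1) * (-x.1 + x.2 ^ 3 + 2 * x.2) + 2.5 * Real.sin x.2) / D x))
    (φ : ℝ × ℝ → ℝ)
    (hφ : ∀ x : ℝ × ℝ, φ x = x.1 - 2 * x.2 - x.2 ^ 3) :
    ∀ x : ℝ × ℝ, fderiv ℝ φ x (f x) = -1 * φ x := by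
  intro x
  have hφ_eq : φ = fun p : ℝ × ℝ => p.1 - (2 * p.2 + p.2 ^ 3) :=
    funext fun p => by rw [hφ]; ring
  have hD_ne : D x ≠ 0 := by rw [hD]; exact (denominator_pos x.1 x.2).ne'
  rw [hφ_eq, fderiv_fst_sub_comp_snd_apply (hasDerivAt_two_mul_add_pow_three x.2), hf]
  field_simp
  rw [hD]
  linear_combination numerator_eq_neg_mul_denominator x.1 x.2 (Real.sin x.2) (Real.cos x.2)
end

section
/- For the same system, the function φ₂(x) = x₁ + sin(x₂) + x₁³ satisfies ∇φ₂(x)·f(x) = 2.5·φ₂(x) for all x ∈ ℝ². -/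
/-! The vector field is built around the eigenfunction: with `a = 1 + 3x₁²` and `b = cos x₂` the
gradient of `φ₂`, and `q = -x₁ + x₂³ + 2x₂`, the numerators of `f` are `c φ₂ + b q` and
`2.5 φ₂ - a q` with `c = 2.5 (3x₂² + 2)`. In `∇φ₂ · f` the `q` terms cancel, and what remains is
`(a c + 2.5 b) φ₂ = 2.5 D φ₂` because `D = (1 + 3x₁²)(3x₂² + 2) + cos x₂`. -/

open Real

theorem fderiv_add_sin_add_cube_apply (x v : ℝ × ℝ) :
    fderiv ℝ (fun p : ℝ × ℝ => p.1 + sin p.2 + p.1 ^ 3) x v =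
      (1 + 3 * x.1 ^ 2) * v.1 + cos x.2 * v.2 := by
  have hfst : HasFDerivAt (fun p : ℝ × ℝ => p.1) (ContinuousLinearMap.fst ℝ ℝ ℝ) x :=
    hasFDerivAt_fst
  have hsin : HasFDerivAt (fun p : ℝ × ℝ => sin p.2)
      (cos x.2 • ContinuousLinearMap.snd ℝ ℝ ℝ) x :=
    (hasDerivAt_sin x.2).comp_hasFDerivAt x hasFDerivAt_snd
  have hcube : HasFDerivAt (fun p : ℝ × ℝ => p.1 ^ 3)
      ((3 * x.1 ^ 2) • ContinuousLinearMap.fst ℝ ℝ ℝ) x := by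
    simpa [Function.comp_def] using (hasDerivAt_pow 3 x.1).comp_hasFDerivAt x hfst
  rw [show fderiv ℝ (fun p : ℝ × ℝ => p.1 + sin p.2 + p.1 ^ 3) x = _ from
    ((hfst.add hsin).add hcube).fderiv]
  simp only [add_apply, smul_apply, ContinuousLinearMap.coe_fst',
    ContinuousLinearMap.coe_snd', smul_eq_mul]
  ring

theorem denominator_pos_s9 (s t : ℝ) : 0 < 9 * s ^ 2 * t ^ 2 + 6 * s ^ 2 + 3 * t ^ 2 + cos t + 2 := by
  nlinarith [neg_one_le_cos t, sq_nonneg s, sq_nonneg t, sq_nonneg (s * t)]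

theorem mul_div_add_mul_div_eq_of_mul_eq {a b c μ l φ q D : ℝ} (hD : D ≠ 0)
    (h : l * D = a * c + b * μ) :
    a * ((c * φ + q * b) / D) + b * ((μ * φ - a * q) / D) = l * φ := by
  rw [mul_div_assoc', mul_div_assoc', ← add_div, div_eq_iff hD]
  linear_combination -φ * h

/-- For the second analytical example, φ₂(x) = x₁ + sin(x₂) + x₁³ satisfies
∇φ₂(x)·f(x) = 2.5·φ₂(x) for all x ∈ ℝ². -/
theorem second_example_principal_eigenfunction_two
    (D : ℝ × ℝ → ℝ)
    (hD : ∀ x : ℝ × ℝ, D x =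
      9 * x.1 ^ 2 * x.2 ^ 2 + 6 * x.1 ^ 2 + 3 * x.2 ^ 2 + Real.cos x.2 + 2)
    (f : ℝ × ℝ → ℝ × ℝ)
    (hf : ∀ x : ℝ × ℝ, f x =
      (((7.5 * x.2 ^ 2 + 5) * (x.1 ^ 3 + x.1 + Real.sin x.2) +
          (-x.1 + x.2 ^ 3 + 2 * x.2) * Real.cos x.2) / D x,
       (2.5 * x.1 ^ 3 + 2.5 * x.1 -
          (3 * x.1 ^ 2 + 1) * (-x.1 + x.2 ^ 3 + 2 * x.2) + 2.5 * Real.sin x.2) / D x))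
    (φ : ℝ × ℝ → ℝ)
    (hφ : ∀ x : ℝ × ℝ, φ x = x.1 + Real.sin x.2 + x.1 ^ 3) :
    ∀ x : ℝ × ℝ, fderiv ℝ φ x (f x) = 2.5 * φ x := by
  obtain rfl : φ = fun p : ℝ × ℝ => p.1 + sin p.2 + p.1 ^ 3 := funext hφ
  intro x
  have hDx : D x ≠ 0 := by rw [hD x]; exact (denominator_pos_s9 x.1 x.2).ne'
  have key := mul_div_add_mul_div_eq_of_mul_eq (a := 1 + 3 * x.1 ^ 2) (b := cos x.2)
    (c := 7.5 * x.2 ^ 2 + 5) (μ := 2.5) (l := 2.5) (φ := x.1 + sin x.2 + x.1 ^ 3)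
    (q := -x.1 + x.2 ^ 3 + 2 * x.2) hDx (by rw [hD x]; ring)
  rw [fderiv_add_sin_add_cube_apply, hf x, ← key]
  ring
end
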